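/- arXiv:1608.04047 — 2 statements merged into one kernel-verified Lean document; each statement's English description precedes it below -/
import Mathlib

section
/- Suppose q > 4 and [F : 𝔽_p] = 2^s for some s ≥ 1, and let K be the unique subfield of F of order √q. Then there exists a positive integer d with gcd(d, q−1) = 1 such that d is nondegenerate over F but degenerate over K. Explicitly: d = q − √q + 1 has these properties when √q mod 3 ∈ {0, 1}; d = (q+2)/3 has these properties when √q mod 9 ∈ {2, 8}; and d = (2q+1)/3 has these properties when √q mod 9 ∈ {5, 8}. -/
/-! With `q = r²`, each candidate `d` satisfies `d ≡ 1 (mod r - 1)`, so it is degenerate over the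
subfield, and `gcd(d, q - 1) = gcd(d, r + 1) = 1` by the residue of `r` mod 3 or mod 9. Over `F`
the powers of `p` modulo `q - 1 = p^N - 1` are exactly `1, p, …, p^(N-1)`, all below `q - 1`;
since `1 < d < q - 1`, nondegeneracy amounts to `d` not being a power of `p`, which follows from
`p ∣ r`. -/

noncomputable section

/-- `d` is degenerate over a finite field `K` of characteristic `p` with `m = |K| - 1`
if `d ≡ p^j (mod m)` for some integer `j ≥ 0`. -/
def IsDegenerate (p d m : ℕ) : Prop :=
  ∃ j : ℕ, (d : ZMod m) = (p : ZMod m) ^ j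

/-- `d` is a positive exponent, coprime to `q - 1`, nondegenerate over the field of
order `q` but degenerate over its subfield of order `r = √q`. -/
def IsGoodExponent (p q r d : ℕ) : Prop :=
  0 < d ∧ Nat.gcd d (q - 1) = 1 ∧ ¬ IsDegenerate p d (q - 1) ∧ IsDegenerate p d (r - 1)

theorem isDegenerate_of_modEq_one {p d m : ℕ} (h : d ≡ 1 [MOD m]) : IsDegenerate p d m :=
  ⟨0, by simpa using (ZMod.natCast_eq_natCast_iff _ _ _).mpr h⟩

theorem IsDegenerate.exists_lt_modEq_pow {p d N : ℕ} (hp : 0 < p) (hN : 0 < N)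
    (h : IsDegenerate p d (p ^ N - 1)) : ∃ i < N, d ≡ p ^ i [MOD p ^ N - 1] := by
  obtain ⟨j, hj⟩ := h
  have hpN : (p : ZMod (p ^ N - 1)) ^ N = 1 := by
    rw [← Nat.cast_pow, ← Nat.sub_add_cancel (Nat.one_le_pow N p hp)]
    simp
  refine ⟨j % N, Nat.mod_lt j hN, (ZMod.natCast_eq_natCast_iff _ _ _).mp ?_⟩
  rw [hj, pow_eq_pow_mod j hpN, Nat.cast_pow]

theorem pow_lt_pow_sub_one {p N i : ℕ} (hp : 2 ≤ p) (hpN : 2 < p ^ N) (hi : i < N) :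
    p ^ i < p ^ N - 1 := by
  have hle : p ^ i ≤ p ^ (N - 1) := Nat.pow_le_pow_right (by omega) (by omega)
  have hsucc : p ^ N = p ^ (N - 1) * p := by rw [← pow_succ, Nat.sub_add_cancel (by omega)]
  have hmul : p ^ (N - 1) * 2 ≤ p ^ (N - 1) * p := Nat.mul_le_mul_left _ hp
  have hpos : 0 < p ^ (N - 1) := Nat.pow_pos (by omega)
  omega

theorem not_isDegenerate_of_lt {p d N : ℕ} (hp : 2 ≤ p) (hpN : 2 < p ^ N)
    (hd : d < p ^ N - 1) (hne : ∀ i < N, d ≠ p ^ i) : ¬ IsDegenerate p d (p ^ N - 1) := by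
  intro h
  have hN : 0 < N := Nat.pos_of_ne_zero (by rintro rfl; simp at hpN)
  obtain ⟨i, hi, hdi⟩ := h.exists_lt_modEq_pow (by omega) hN
  exact hne i hi (hdi.eq_of_lt_of_lt hd (pow_lt_pow_sub_one hp hpN hi))

theorem ne_pow_of_not_dvd {p d : ℕ} (hd : d ≠ 1) (hpd : ¬ p ∣ d) (i : ℕ) :
    d ≠ p ^ i := by
  rintro rfl
  cases i with
  | zero => exact hd (pow_zero p)
  | succ i => exact hpd (dvd_pow_self p i.succ_ne_zero)

theorem ne_pow_of_three_mul_eq_add_two {p r d : ℕ} (hp : 2 ≤ p) (hpr : p ∣ r) (hr : 2 < r)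
    (hd : 3 * d = r * r + 2) (i : ℕ) : d ≠ p ^ i := by
  rintro rfl
  obtain ⟨u, rfl⟩ := hpr
  match i with
  | 0 => nlinarith
  | 1 =>
    have hu : p ≤ p * u :=
      Nat.le_mul_of_pos_right p (Nat.pos_of_ne_zero (by rintro rfl; simp at hr))
    have hsq : 3 * (p * u) ≤ p * u * (p * u) := Nat.mul_le_mul_right _ hr
    rw [pow_one] at hd
    omega
  | j + 2 =>
    -- `p²` divides both `3 d` and `r²`, hence `2`
    have hdvd : p * p ∣ 2 :=
      (Nat.dvd_add_right (show p * p ∣ p * u * (p * u) from ⟨u * u, by ring⟩)).mp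
        ⟨3 * p ^ j, by rw [← hd]; ring⟩
    have := Nat.le_of_dvd two_pos hdvd
    nlinarith

theorem isGoodExponent_of_modEq_one {p r N d : ℕ} (hp : 2 ≤ p) (hrN : r * r = p ^ N)
    (hr : 2 < r) (hd : d ≡ 1 [MOD r - 1]) (hcop : Nat.Coprime d (r + 1)) (hlt : d < r * r - 1)
    (hne : ∀ i, d ≠ p ^ i) : IsGoodExponent p (r * r) r d := by
  refine ⟨Nat.pos_of_ne_zero fun h0 => ?_, ?_, ?_, isDegenerate_of_modEq_one hd⟩
  · rw [h0, Nat.coprime_zero_left] at hcop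
    omega
  · rw [mul_self_tsub_one]
    exact hcop.mul_right (Nat.coprime_of_mul_modEq_one 1 (by simpa using hd))
  · rw [hrN] at hlt ⊢
    exact not_isDegenerate_of_lt hp (by nlinarith) hlt fun i _ => hne i

section Candidates

variable {p r N : ℕ}

theorem isGoodExponent_mul_self_sub_add_one (hp : 2 ≤ p) (hrN : r * r = p ^ N) (hpr : p ∣ r)
    (hr : 2 < r) (h3 : r % 3 = 0 ∨ r % 3 = 1) : IsGoodExponent p (r * r) r (r * r - r + 1) := by
  have hd : r * r - r + 1 = 1 + (r - 1) * r := by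
    rw [Nat.sub_one_mul]
    have := Nat.le_mul_self r
    omega
  have hd' : r * r - r + 1 = 3 + (r + 1) * (r - 2) := by
    obtain ⟨u, rfl⟩ : ∃ u, r = u + 2 := ⟨r - 2, by omega⟩
    simp only [Nat.add_sub_cancel]
    ring_nf
    omega
  refine isGoodExponent_of_modEq_one hp hrN hr ?_ ?_ (by omega) ?_
  · rw [hd]
    exact Nat.add_mul_mod_self_left 1 (r - 1) r
  · rw [hd', Nat.coprime_add_mul_left_left]
    exact (Nat.prime_three.coprime_iff_not_dvd).mpr (by omega)
  · refine ne_pow_of_not_dvd (by omega) fun hpd => ?_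
    rw [hd, Nat.dvd_add_left (hpr.mul_left _)] at hpd
    exact absurd (Nat.le_of_dvd one_pos hpd) (by omega)

theorem isGoodExponent_mul_self_add_two_div_three (hp : 2 ≤ p) (hrN : r * r = p ^ N)
    (hpr : p ∣ r) (hr : 2 < r) (h9 : r % 9 = 2 ∨ r % 9 = 8) :
    IsGoodExponent p (r * r) r ((r * r + 2) / 3) := by
  have hsq9 : r * r % 9 = 4 ∨ r * r % 9 = 1 := by
    have := Nat.mul_mod r r 9
    rcases h9 with h | h <;> rw [h] at this <;> omega
  have hr9 : 9 ≤ r * r := Nat.mul_le_mul hr hr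
  obtain ⟨t, ht⟩ : ∃ t, r + 1 = 3 * t := ⟨(r + 1) / 3, by omega⟩
  have hd : (r * r + 2) / 3 = 1 + (r - 1) * t := by
    have h : r * r - 1 = 3 * ((r - 1) * t) := by rw [mul_self_tsub_one, ht]; ring
    omega
  refine isGoodExponent_of_modEq_one hp hrN hr ?_ ?_ (by omega)
    (ne_pow_of_three_mul_eq_add_two hp hpr hr (by omega))
  · rw [hd]
    exact Nat.add_mul_mod_self_left 1 (r - 1) t
  · rw [ht]
    refine Nat.Coprime.mul_right ?_ ?_
    · exact ((Nat.prime_three.coprime_iff_not_dvd).mpr (by omega)).symm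
    · rw [hd, Nat.coprime_add_mul_right_left]
      exact Nat.coprime_one_left t

theorem isGoodExponent_two_mul_mul_self_add_one_div_three (hp : 2 ≤ p) (hrN : r * r = p ^ N)
    (hpr : p ∣ r) (hr : 2 < r) (h9 : r % 9 = 5 ∨ r % 9 = 8) :
    IsGoodExponent p (r * r) r ((2 * (r * r) + 1) / 3) := by
  have hsq9 : r * r % 9 = 7 ∨ r * r % 9 = 1 := by
    have := Nat.mul_mod r r 9
    rcases h9 with h | h <;> rw [h] at this <;> omega
  have hr9 : 9 ≤ r * r := Nat.mul_le_mul hr hr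
  obtain ⟨t, ht⟩ : ∃ t, r + 1 = 3 * t := ⟨(r + 1) / 3, by omega⟩
  have hd : (2 * (r * r) + 1) / 3 = 1 + (r - 1) * (2 * t) := by
    have h : r * r - 1 = 3 * ((r - 1) * t) := by rw [mul_self_tsub_one, ht]; ring
    rw [mul_left_comm (r - 1)]
    omega
  refine isGoodExponent_of_modEq_one hp hrN hr ?_ ?_ (by omega) ?_
  · rw [hd]
    exact Nat.add_mul_mod_self_left 1 (r - 1) (2 * t)
  · rw [ht]
    refine Nat.Coprime.mul_right ?_ ?_
    · exact ((Nat.prime_three.coprime_iff_not_dvd).mpr (by omega)).symm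
    · rw [hd, ← mul_assoc, Nat.coprime_add_mul_right_left]
      exact Nat.coprime_one_left t
  · refine ne_pow_of_not_dvd (by omega) fun hpd => ?_
    have h3d : p ∣ 2 * (r * r) + 1 := by
      rw [← Nat.mul_div_cancel' (show 3 ∣ 2 * (r * r) + 1 by omega)]
      exact hpd.mul_left 3
    rw [Nat.dvd_add_right ((hpr.mul_right r).mul_left 2)] at h3d
    exact absurd (Nat.le_of_dvd one_pos h3d) (by omega)

end Candidates

theorem exists_exponent_nondegenerate_degenerate_sqrt_subfield_general
    (p : ℕ) (hp : p.Prime) (F : Type) [Fintype F]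
    (s : ℕ) (hs : 1 ≤ s) (hcard : Fintype.card F = p ^ 2 ^ s)
    (hq : 4 < Fintype.card F) :
    (∃ d : ℕ, IsGoodExponent p (Fintype.card F) (p ^ 2 ^ (s - 1)) d) ∧
    (p ^ 2 ^ (s - 1) % 3 = 0 ∨ p ^ 2 ^ (s - 1) % 3 = 1 →
      IsGoodExponent p (Fintype.card F) (p ^ 2 ^ (s - 1))
        (Fintype.card F - p ^ 2 ^ (s - 1) + 1)) ∧
    (p ^ 2 ^ (s - 1) % 9 = 2 ∨ p ^ 2 ^ (s - 1) % 9 = 8 →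
      IsGoodExponent p (Fintype.card F) (p ^ 2 ^ (s - 1)) ((Fintype.card F + 2) / 3)) ∧
    (p ^ 2 ^ (s - 1) % 9 = 5 ∨ p ^ 2 ^ (s - 1) % 9 = 8 →
      IsGoodExponent p (Fintype.card F) (p ^ 2 ^ (s - 1)) ((2 * Fintype.card F + 1) / 3)) := by
  set r := p ^ 2 ^ (s - 1)
  have hrN : r * r = p ^ 2 ^ s := by
    rw [← pow_add, ← two_mul, ← pow_succ', Nat.sub_add_cancel hs]
  rw [hcard, ← hrN] at hq ⊢
  have hr : 2 < r := by nlinarith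
  have hpr : p ∣ r := dvd_pow_self p (by positivity)
  have hA := isGoodExponent_mul_self_sub_add_one hp.two_le hrN hpr hr
  have hB := isGoodExponent_mul_self_add_two_div_three hp.two_le hrN hpr hr
  have hC := isGoodExponent_two_mul_mul_self_add_one_div_three hp.two_le hrN hpr hr
  refine ⟨?_, hA, hB, hC⟩
  obtain h | h | h | h | h : r % 3 = 0 ∨ r % 3 = 1 ∨ r % 9 = 2 ∨ r % 9 = 5 ∨ r % 9 = 8 := by
    omega
  exacts [⟨_, hA (.inl h)⟩, ⟨_, hA (.inr h)⟩, ⟨_, hB (.inl h)⟩, ⟨_, hC (.inl h)⟩,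
    ⟨_, hB (.inr h)⟩]

/-- **Lemma.**  Suppose `q > 4` and `[F : 𝔽_p] = 2^s` with `s ≥ 1`, and let `K` be the
subfield of `F` of order `√q = p^(2^(s-1))`.  Then there is a positive integer `d` with
`gcd(d, q-1) = 1` that is nondegenerate over `F` but degenerate over `K`; explicitly,
`d = q - √q + 1` works when `√q mod 3 ∈ {0, 1}`, `d = (q+2)/3` works when
`√q mod 9 ∈ {2, 8}`, and `d = (2q+1)/3` works when `√q mod 9 ∈ {5, 8}`. -/
theorem exists_exponent_nondegenerate_degenerate_sqrt_subfield
    (p : ℕ) (hp : p.Prime) (F : Type) [Field F] [Fintype F] [CharP F p]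
    (s : ℕ) (hs : 1 ≤ s) (hcard : Fintype.card F = p ^ 2 ^ s)
    (hq : 4 < Fintype.card F) :
    (∃ d : ℕ, IsGoodExponent p (Fintype.card F) (p ^ 2 ^ (s - 1)) d) ∧
    (p ^ 2 ^ (s - 1) % 3 = 0 ∨ p ^ 2 ^ (s - 1) % 3 = 1 →
      IsGoodExponent p (Fintype.card F) (p ^ 2 ^ (s - 1))
        (Fintype.card F - p ^ 2 ^ (s - 1) + 1)) ∧
    (p ^ 2 ^ (s - 1) % 9 = 2 ∨ p ^ 2 ^ (s - 1) % 9 = 8 →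
      IsGoodExponent p (Fintype.card F) (p ^ 2 ^ (s - 1)) ((Fintype.card F + 2) / 3)) ∧
    (p ^ 2 ^ (s - 1) % 9 = 5 ∨ p ^ 2 ^ (s - 1) % 9 = 8 →
      IsGoodExponent p (Fintype.card F) (p ^ 2 ^ (s - 1)) ((2 * Fintype.card F + 1) / 3)) :=
  exists_exponent_nondegenerate_degenerate_sqrt_subfield_general p hp F s hs hcard hq
end
end

section
/- Let t, n, and d be positive integers with t ≥ 2, d ≢ 0 (mod t^n−1), and d ≢ 1 (mod t−1). Then there exist nonzero a, b ∈ ℤ/(t^n−1)ℤ such that a ≺ b and d·b ≺ d·a. -/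
noncomputable section

/-- The `i`-th digit of the standard `t`-ary expansion of the canonical representative
of `a ∈ ℤ/Mℤ` (for `M = t^n - 1`, the representative is `< t^n`, so these are exactly
the digits `a_0, …, a_{n-1}` of the standard expansion, and `0` for `i ≥ n`). -/
def zmodDigit (t : ℕ) {M : ℕ} (a : ZMod M) (i : ℕ) : ℕ :=
  a.val / t ^ i % t

/-- `b` covers `a` (written `a ⪯ b`): every `t`-ary digit of `a` is at most the
corresponding digit of `b`. -/
def Covers (t : ℕ) {M : ℕ} (a b : ZMod M) : Prop :=
  ∀ i : ℕ, zmodDigit t a i ≤ zmodDigit t b i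

/-- `b` strictly covers `a` (written `a ≺ b`): `a ⪯ b` and `a ≠ b`. -/
def StrictlyCovers (t : ℕ) {M : ℕ} (a b : ZMod M) : Prop :=
  Covers t a b ∧ a ≠ b

/-!
Write `s = t - 1` and `R = 1 + t + ⋯ + t^(n-1)`, so that `t^n - 1 = s R` and, for `k < s`, the
residue `k R` has all `n` digits equal to `k`. Multiplication by `d` acts on these residues as
`d (k R) = (d k mod s) R`, so the question becomes one about `k ↦ d k mod s`.
If `s ∣ d`, then `d R = 0` while `d · 1 = d ≠ 0`, and `1 ≺ R`.
Otherwise `e = d mod s ≥ 2`, and with `k = ⌊(s-1)/e⌋` the multiple `k e` is still `< s`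
but `(k+1) e` wraps around to `(k+1) e - s < k e`; so `a = k R ≺ b = (k+1) R` and `d b ≺ d a`.
-/

open Finset

def repunit (t n : ℕ) : ℕ := ∑ i ∈ range n, t ^ i

section Repunit

variable {t n : ℕ}

lemma repunit_succ (t n : ℕ) : repunit t (n + 1) = t * repunit t n + 1 := geom_sum_succ

lemma repunit_pos (hn : 0 < n) : 0 < repunit t n := by
  obtain ⟨m, rfl⟩ := Nat.exists_eq_add_one_of_ne_zero hn.ne'
  rw [repunit_succ]
  omega

lemma sub_one_mul_repunit (t n : ℕ) : (t - 1) * repunit t n = t ^ n - 1 := by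
  rcases t with _ | s
  · rcases n with _ | n <;> simp
  · rw [Nat.add_sub_cancel, ← geom_sum_mul_add s n, mul_comm, repunit, Nat.add_sub_cancel]

lemma mul_repunit_lt {k : ℕ} (hk : k < t - 1) (hn : 0 < n) : k * repunit t n < t ^ n - 1 := by
  rw [← sub_one_mul_repunit]
  exact Nat.mul_lt_mul_of_pos_right hk (repunit_pos hn)

lemma mul_repunit_div_pow_mod {k : ℕ} (hk : k < t) (n i : ℕ) :
    k * repunit t n / t ^ i % t = if i < n then k else 0 := by
  induction n generalizing i with
  | zero => simp [repunit]
  | succ n ih =>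
    have hsplit : k * repunit t (n + 1) = k + t * (k * repunit t n) := by
      rw [repunit_succ]; ring
    rcases i with _ | i
    · simp [hsplit, Nat.mod_eq_of_lt hk]
    · rw [hsplit, pow_succ', ← Nat.div_div_eq_div_mul, Nat.add_mul_div_left _ _ (by omega),
        Nat.div_eq_of_lt hk, zero_add, ih]
      simp

end Repunit

lemma exists_mul_succ_mod_lt {d s : ℕ} (hs : 0 < s) (he : 2 ≤ d % s) :
    ∃ k, 0 < k ∧ k + 1 < s ∧ d * (k + 1) % s < d * k % s := by
  have hes : d % s < s := Nat.mod_lt _ hs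
  have hk_le : (s - 1) / (d % s) * (d % s) ≤ s - 1 := Nat.div_mul_le_self _ _
  have hk_succ : s - 1 < (s - 1) / (d % s) * (d % s) + d % s :=
    (Nat.lt_mul_div_succ (s - 1) (by omega : 0 < d % s)).trans_eq (by ring)
  refine ⟨(s - 1) / (d % s), Nat.div_pos (by omega) (by omega), ?_⟩
  generalize (s - 1) / (d % s) = k at hk_le hk_succ ⊢
  have hk2 : k * 2 ≤ k * (d % s) := Nat.mul_le_mul_left k he
  have hmod_k : d * k % s = k * (d % s) := by
    rw [← Nat.mod_mul_mod, Nat.mod_eq_of_lt (by rw [mul_comm]; omega), mul_comm]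
  have hmod_succ : d * (k + 1) % s = k * (d % s) + d % s - s := by
    rw [← Nat.mod_mul_mod, mul_add_one, mul_comm, Nat.mod_eq_sub_mod (by omega),
      Nat.mod_eq_of_lt (by omega)]
  rw [hmod_k, hmod_succ]
  omega

section Digits

variable {t n j k : ℕ}

lemma zmodDigit_natCast_of_lt {M x : ℕ} (hx : x < M) (i : ℕ) :
    zmodDigit t (x : ZMod M) i = x / t ^ i % t := by
  rw [zmodDigit, ZMod.val_cast_of_lt hx]

lemma covers_zero_left {M : ℕ} (a : ZMod M) : Covers t 0 a := by
  intro i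
  simp [zmodDigit]

lemma natCast_mul_natCast_mul_repunit (d k : ℕ) :
    (d : ZMod (t ^ n - 1)) * ((k * repunit t n : ℕ) : ZMod (t ^ n - 1)) =
      ((d * k % (t - 1) * repunit t n : ℕ) : ZMod (t ^ n - 1)) := by
  rw [← Nat.cast_mul, ZMod.natCast_eq_natCast_iff, ← sub_one_mul_repunit, ← mul_assoc]
  exact (Nat.mod_modEq _ _).symm.mul_right' _

lemma natCast_mul_repunit_ne_zero (hk0 : 0 < k) (hk : k < t - 1) (hn : 0 < n) :
    ((k * repunit t n : ℕ) : ZMod (t ^ n - 1)) ≠ 0 := by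
  rw [Ne, ZMod.natCast_eq_zero_iff]
  exact Nat.not_dvd_of_pos_of_lt (Nat.mul_pos hk0 (repunit_pos hn)) (mul_repunit_lt hk hn)

lemma covers_natCast_mul_repunit {m : ℕ} (hjk : j ≤ k) (hk : k < t - 1) (hmn : m ≤ n)
    (hn : 0 < n) :
    Covers t ((j * repunit t m : ℕ) : ZMod (t ^ n - 1))
      ((k * repunit t n : ℕ) : ZMod (t ^ n - 1)) := by
  have hkn := mul_repunit_lt hk hn
  have hjm : j * repunit t m ≤ k * repunit t n :=
    Nat.mul_le_mul hjk (sum_le_sum_of_subset (range_subset_range.2 hmn))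
  intro i
  rw [zmodDigit_natCast_of_lt (by omega), zmodDigit_natCast_of_lt hkn,
    mul_repunit_div_pow_mod (by omega), mul_repunit_div_pow_mod (by omega)]
  split_ifs <;> omega

lemma strictlyCovers_natCast_mul_repunit (hjk : j < k) (hk : k < t - 1) (hn : 0 < n) :
    StrictlyCovers t ((j * repunit t n : ℕ) : ZMod (t ^ n - 1))
      ((k * repunit t n : ℕ) : ZMod (t ^ n - 1)) := by
  refine ⟨covers_natCast_mul_repunit hjk.le hk le_rfl hn, fun h => ?_⟩
  have hkn := mul_repunit_lt hk hn
  have hjn := mul_repunit_lt (hjk.trans hk) hn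
  rw [ZMod.natCast_eq_natCast_iff', Nat.mod_eq_of_lt hjn, Nat.mod_eq_of_lt hkn] at h
  exact hjk.ne (Nat.eq_of_mul_eq_mul_right (repunit_pos hn) h)

end Digits

theorem exists_strict_cover_of_not_one_mod_general
    (t n d : ℕ) (ht : 2 ≤ t) (hn : 0 < n)
    (hd0 : (d : ZMod (t ^ n - 1)) ≠ 0)
    (hd1 : (d : ZMod (t - 1)) ≠ 1) :
    ∃ a b : ZMod (t ^ n - 1), a ≠ 0 ∧ b ≠ 0 ∧
      StrictlyCovers t a b ∧
      StrictlyCovers t ((d : ZMod (t ^ n - 1)) * b) ((d : ZMod (t ^ n - 1)) * a) := by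
  have hs : 1 < t - 1 := by
    by_contra h
    obtain rfl : t = 2 := by omega
    exact hd1 (Subsingleton.elim (α := ZMod 1) _ _)
  have he1 : d % (t - 1) ≠ 1 := fun h => hd1 (by rw [← ZMod.natCast_mod, h, Nat.cast_one])
  rcases Nat.eq_zero_or_pos (d % (t - 1)) with he0 | he0
  · have := nontrivial_of_ne _ _ hd0
    have hdR : (d : ZMod (t ^ n - 1)) * ((1 * repunit t n : ℕ) : ZMod (t ^ n - 1)) = 0 := by
      simpa [he0] using natCast_mul_natCast_mul_repunit (t := t) (n := n) d 1
    have hcov : Covers t 1 ((1 * repunit t n : ℕ) : ZMod (t ^ n - 1)) := by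
      simpa [repunit] using covers_natCast_mul_repunit (j := 1) (m := 1) le_rfl hs hn hn
    refine ⟨1, _, one_ne_zero, natCast_mul_repunit_ne_zero one_pos hs hn,
      ⟨hcov, fun h => hd0 ?_⟩, ⟨?_, fun h => hd0 ?_⟩⟩
    · rw [← mul_one (d : ZMod (t ^ n - 1)), h, hdR]
    · rw [hdR]; exact covers_zero_left _
    · rw [← mul_one (d : ZMod (t ^ n - 1)), ← h, hdR]
  · obtain ⟨k, hk0, hks, hlt⟩ :=
      exists_mul_succ_mod_lt (d := d) (by omega : 0 < t - 1) (by omega)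
    refine ⟨_, _, natCast_mul_repunit_ne_zero hk0 (by omega) hn,
      natCast_mul_repunit_ne_zero k.succ_pos hks hn,
      strictlyCovers_natCast_mul_repunit k.lt_succ_self hks hn, ?_⟩
    rw [natCast_mul_natCast_mul_repunit, natCast_mul_natCast_mul_repunit]
    exact strictlyCovers_natCast_mul_repunit hlt (Nat.mod_lt _ (by omega)) hn

/-- **Lemma.**  Let `t ≥ 2` and let `n`, `d` be positive integers with
`d ≢ 0 (mod t^n - 1)` and `d ≢ 1 (mod t - 1)`.  Then there exist nonzero
`a, b ∈ ℤ/(t^n-1)ℤ` with `a ≺ b` and `d·b ≺ d·a`. -/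
theorem exists_strict_cover_of_not_one_mod
    (t n d : ℕ) (ht : 2 ≤ t) (hn : 0 < n) (hd : 0 < d)
    (hd0 : (d : ZMod (t ^ n - 1)) ≠ 0)
    (hd1 : (d : ZMod (t - 1)) ≠ 1) :
    ∃ a b : ZMod (t ^ n - 1), a ≠ 0 ∧ b ≠ 0 ∧
      StrictlyCovers t a b ∧
      StrictlyCovers t ((d : ZMod (t ^ n - 1)) * b) ((d : ZMod (t ^ n - 1)) * a) :=
  exists_strict_cover_of_not_one_mod_general t n d ht hn hd0 hd1
end
end
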